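/- arXiv:2303.11908 — 5 statements merged into one kernel-verified Lean document; each statement's English description precedes it below -/
import Mathlib

section
/- (Bias of the biased periodogram.) Let N ≥ 1 be an integer, let ε > 0, and let M̂ ∈ ℕ satisfy Σ_{|k| ≥ M̂} ‖R[k]‖₂ ≤ ε/2. If N ≥ 2 M̂ ‖R‖₁ / ε, then sup_{s∈[−1/2,1/2]} ‖Φ(s) − Σ_{k=−N+1}^{N−1} e^{−j2πsk} (1 − |k|/N) R[k]‖₂ ≤ ε. -/
/-- The spectral norm (largest singular value): the operator norm of a matrix
acting between Euclidean spaces. -/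
noncomputable def spec2 {𝕜 m n : Type*} [RCLike 𝕜] [Fintype m] [Fintype n] [DecidableEq n]
    (M : Matrix m n 𝕜) : ℝ :=
  letI := Matrix.instL2OpNormedAddCommGroup (𝕜 := 𝕜) (m := m) (n := n)
  ‖M‖

/-- The spectral density `Φ(s) = Σ_{k∈ℤ} e^{−j2πsk} R[k]`. -/
noncomputable def Phi {n : ℕ} (R : ℤ → Matrix (Fin n) (Fin n) ℝ) (s : ℝ) :
    Matrix (Fin n) (Fin n) ℂ :=
  ∑' k : ℤ,
    Complex.exp (-(2 * (Real.pi : ℂ) * (s : ℂ) * (k : ℂ)) * Complex.I) • (R k).map (↑· : ℝ → ℂ)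

/-!
The bias `Φ(s) - E[periodogram]` is `Σ_k (1 - w_N(k)) e^{-j2πsk} R[k]`, where `w_N` is the
triangular window `(1 - |k|/N)₊`. Since `0 ≤ 1 - w_N(k) ≤ min(|k|/N, 1)`, the lags `|k| < M̂` add
at most `(M̂/N) ‖R‖₁ ≤ ε/2` and the tail `|k| ≥ M̂` at most `ε/2`.
-/

open scoped Matrix.Norms.L2Operator
open Matrix

lemma EuclideanSpace.norm_sq_eq_norm_sq_re_add_norm_sq_im {n : Type*} [Fintype n]
    (z : EuclideanSpace ℂ n) :
    ‖z‖ ^ 2 = ‖WithLp.toLp 2 fun i => (z i).re‖ ^ 2 + ‖WithLp.toLp 2 fun i => (z i).im‖ ^ 2 := by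
  simp only [EuclideanSpace.norm_sq_eq, ← Finset.sum_add_distrib]
  refine Finset.sum_congr rfl fun i _ => ?_
  simp only [Complex.sq_norm, Complex.normSq_apply, Real.norm_eq_abs, sq_abs]
  ring

lemma Matrix.l2_opNorm_map_ofReal_le {m n : Type*} [Fintype m] [Fintype n] [DecidableEq n]
    (A : Matrix m n ℝ) : ‖A.map ((↑) : ℝ → ℂ)‖ ≤ ‖A‖ := by
  rw [l2_opNorm_def]
  refine ContinuousLinearMap.opNorm_le_bound _ (norm_nonneg A) fun z => ?_
  set u : EuclideanSpace ℝ n := WithLp.toLp 2 fun i => (z i).re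
  set v : EuclideanSpace ℝ n := WithLp.toLp 2 fun i => (z i).im
  set w : EuclideanSpace ℂ m := (toEuclideanLin.trans LinearMap.toContinuousLinearMap)
    (A.map ((↑) : ℝ → ℂ)) z
  have hre : (WithLp.toLp 2 fun i => (w i).re) = (EuclideanSpace.equiv m ℝ).symm (A *ᵥ u) := by
    ext i
    simp [w, u, mulVec, dotProduct, Complex.re_sum]
  have him : (WithLp.toLp 2 fun i => (w i).im) = (EuclideanSpace.equiv m ℝ).symm (A *ᵥ v) := by
    ext i
    simp [w, v, mulVec, dotProduct, Complex.im_sum]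
  have hsq : ‖w‖ ^ 2 ≤ (‖A‖ * ‖z‖) ^ 2 := by
    rw [EuclideanSpace.norm_sq_eq_norm_sq_re_add_norm_sq_im w, hre, him, mul_pow,
      EuclideanSpace.norm_sq_eq_norm_sq_re_add_norm_sq_im z, mul_add, ← mul_pow, ← mul_pow]
    gcongr <;> exact A.l2_opNorm_mulVec _
  exact le_of_sq_le_sq hsq (by positivity)

lemma tsum_mul_le_mul_tsum_add_tsum_subtype {ι : Type*} {a r : ι → ℝ} {s : Set ι} {δ : ℝ}
    (hr0 : ∀ i, 0 ≤ r i) (hr : Summable r) (ha0 : ∀ i, 0 ≤ a i) (ha1 : ∀ i, a i ≤ 1)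
    (hδ : 0 ≤ δ) (haδ : ∀ i ∉ s, a i ≤ δ) :
    ∑' i, a i * r i ≤ δ * ∑' i, r i + ∑' i : s, r i := by
  have har : Summable fun i => a i * r i :=
    hr.of_nonneg_of_le (fun i => mul_nonneg (ha0 i) (hr0 i))
      fun i => mul_le_of_le_one_left (hr0 i) (ha1 i)
  rw [← har.tsum_subtype_add_tsum_subtype_compl s, add_comm]
  refine add_le_add ?_ ?_
  · calc ∑' i : ↥sᶜ, a i * r i ≤ ∑' i : ↥sᶜ, δ * r i :=
          (har.subtype _).tsum_le_tsum (fun i => mul_le_mul_of_nonneg_right (haδ i i.2) (hr0 i))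
            ((hr.mul_left δ).subtype _)
      _ = δ * ∑' i : ↥sᶜ, r i := tsum_mul_left
      _ ≤ δ * ∑' i, r i := by gcongr; exact hr.tsum_subtype_le _ _ hr0
  · exact (har.subtype _).tsum_le_tsum (fun i => mul_le_of_le_one_left (hr0 i) (ha1 i))
      (hr.subtype _)

noncomputable def bartlettWindow (N : ℕ) (k : ℤ) : ℝ := max (1 - k.natAbs / N) 0

section bartlettWindow

variable (N : ℕ) (k : ℤ)

lemma one_sub_bartlettWindow_nonneg : 0 ≤ 1 - bartlettWindow N k :=
  sub_nonneg.2 (max_le (sub_le_self _ (by positivity)) zero_le_one)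

lemma one_sub_bartlettWindow_le_one : 1 - bartlettWindow N k ≤ 1 :=
  sub_le_self _ (le_max_right _ _)

lemma one_sub_bartlettWindow_le : 1 - bartlettWindow N k ≤ k.natAbs / N := by
  have := le_max_left (1 - k.natAbs / N : ℝ) 0
  unfold bartlettWindow
  linarith

lemma hasSum_bartlettWindow_smul {E : Type*} [AddCommGroup E] [Module ℝ E] [TopologicalSpace E]
    (hN : N ≠ 0) (g : ℤ → E) :
    HasSum (fun k => bartlettWindow N k • g k)
      (∑ k ∈ Finset.Icc (-(N : ℤ) + 1) ((N : ℤ) - 1), (1 - (k.natAbs : ℝ) / N) • g k) := by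
  have hNpos : (0 : ℝ) < N := by positivity
  have hsupp : ∀ k ∉ Finset.Icc (-(N : ℤ) + 1) ((N : ℤ) - 1), bartlettWindow N k • g k = 0 := by
    intro k hk
    have hkN : (N : ℝ) ≤ k.natAbs := by
      rw [Finset.mem_Icc] at hk
      exact_mod_cast (by omega : N ≤ k.natAbs)
    rw [bartlettWindow, max_eq_right, zero_smul]
    rwa [sub_nonpos, one_le_div hNpos]
  convert hasSum_sum_of_ne_finset_zero (L := .unconditional ℤ) hsupp using 1
  refine Finset.sum_congr rfl fun k hk => ?_
  have hkN : (k.natAbs : ℝ) ≤ N := by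
    rw [Finset.mem_Icc] at hk
    exact_mod_cast (by omega : k.natAbs ≤ N)
  rw [bartlettWindow, max_eq_left]
  rwa [sub_nonneg, div_le_one hNpos]

end bartlettWindow

section Periodogram

variable {n : ℕ} (R : ℤ → Matrix (Fin n) (Fin n) ℝ) (N : ℕ) (s : ℝ)

noncomputable def spectralTerm (k : ℤ) : Matrix (Fin n) (Fin n) ℂ :=
  Complex.exp (-(2 * (Real.pi : ℂ) * (s : ℂ) * (k : ℂ)) * Complex.I) • (R k).map ((↑) : ℝ → ℂ)

noncomputable def expectedPeriodogram : Matrix (Fin n) (Fin n) ℂ :=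
  ∑ k ∈ Finset.Icc (-(N : ℤ) + 1) ((N : ℤ) - 1),
    (((1 - (k.natAbs : ℝ) / N : ℝ) : ℂ) *
      Complex.exp (-(2 * (Real.pi : ℂ) * (s : ℂ) * (k : ℂ)) * Complex.I)) • (R k).map ((↑) : ℝ → ℂ)

lemma norm_spectralTerm_le (k : ℤ) : ‖spectralTerm R s k‖ ≤ spec2 (R k) := by
  rw [spectralTerm, norm_smul, show -(2 * (Real.pi : ℂ) * s * k) = ((-(2 * Real.pi * s * k) : ℝ) : ℂ)
    by push_cast; ring, Complex.norm_exp_ofReal_mul_I, one_mul]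
  exact (R k).l2_opNorm_map_ofReal_le

lemma expectedPeriodogram_eq_sum_smul_spectralTerm :
    expectedPeriodogram R N s = ∑ k ∈ Finset.Icc (-(N : ℤ) + 1) ((N : ℤ) - 1),
      (1 - (k.natAbs : ℝ) / N) • spectralTerm R s k :=
  Finset.sum_congr rfl fun k _ => by rw [spectralTerm, mul_smul, Complex.coe_smul]

lemma norm_Phi_sub_expectedPeriodogram_le (hsum : Summable fun k : ℤ => spec2 (R k))
    (hN : N ≠ 0) :
    ‖Phi R s - expectedPeriodogram R N s‖ ≤ ∑' k, (1 - bartlettWindow N k) * spec2 (R k) := by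
  have hw0 := one_sub_bartlettWindow_nonneg N
  have hterm : Summable (spectralTerm R s) := hsum.of_norm_bounded (norm_spectralTerm_le R s)
  have hbias : Phi R s - expectedPeriodogram R N s
      = ∑' k, (1 - bartlettWindow N k) • spectralTerm R s k := by
    simp only [sub_smul, one_smul]
    rw [expectedPeriodogram_eq_sum_smul_spectralTerm,
      (hterm.hasSum.sub (hasSum_bartlettWindow_smul N hN _)).tsum_eq]
    rfl
  rw [hbias]
  refine tsum_of_norm_bounded (Summable.hasSum ?_) fun k => ?_
  · exact hsum.of_nonneg_of_le (fun k => mul_nonneg (hw0 k) (norm_nonneg (R k)))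
      fun k => mul_le_of_le_one_left (norm_nonneg (R k)) (one_sub_bartlettWindow_le_one N k)
  · rw [norm_smul, Real.norm_of_nonneg (hw0 k)]
    exact mul_le_mul_of_nonneg_left (norm_spectralTerm_le R s k) (hw0 k)

end Periodogram

theorem bias_biased_periodogram_general {n : ℕ}
    (R : ℤ → Matrix (Fin n) (Fin n) ℝ)
    (hsum : Summable fun k : ℤ => spec2 (R k))
    (N : ℕ) (hN : 1 ≤ N) (ε : ℝ) (hε : 0 < ε) (Mhat : ℕ)
    (hMhat : ∑' k : {k : ℤ // Mhat ≤ k.natAbs}, spec2 (R k.val) ≤ ε / 2)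
    (hNlarge : (N : ℝ) ≥ 2 * Mhat * (∑' k : ℤ, spec2 (R k)) / ε) :
    ∀ s ∈ Set.Icc (-(1:ℝ)/2) (1/2),
      spec2 (Phi R s -
        ∑ k ∈ Finset.Icc (-(N : ℤ) + 1) ((N : ℤ) - 1),
          (((1 - (k.natAbs : ℝ) / N : ℝ) : ℂ) *
              Complex.exp (-(2 * (Real.pi : ℂ) * (s : ℂ) * (k : ℂ)) * Complex.I)) •
            (R k).map (↑· : ℝ → ℂ)) ≤ ε := by
  intro s _
  calc spec2 (Phi R s - expectedPeriodogram R N s)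
      ≤ ∑' k, (1 - bartlettWindow N k) * spec2 (R k) :=
        norm_Phi_sub_expectedPeriodogram_le R N s hsum (by omega)
    _ ≤ Mhat / N * ∑' k, spec2 (R k) + ∑' k : {k : ℤ | Mhat ≤ k.natAbs}, spec2 (R k) :=
      tsum_mul_le_mul_tsum_add_tsum_subtype (fun k => norm_nonneg (R k)) hsum
        (one_sub_bartlettWindow_nonneg N) (one_sub_bartlettWindow_le_one N) (by positivity)
        fun k hk => (one_sub_bartlettWindow_le N k).trans (by gcongr; exact (not_le.1 hk).le)
    _ ≤ ε / 2 + ε / 2 := by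
      refine add_le_add ?_ hMhat
      rw [ge_iff_le, div_le_iff₀ hε] at hNlarge
      rw [div_mul_eq_mul_div, div_le_iff₀ (Nat.cast_pos.2 hN)]
      linarith
    _ = ε := add_halves ε

theorem bias_biased_periodogram {n : ℕ} (hn : 1 ≤ n)
    (R : ℤ → Matrix (Fin n) (Fin n) ℝ)
    (hsum : Summable fun k : ℤ => spec2 (R k))
    (hRpos : 0 < ∑' k : ℤ, spec2 (R k))
    (N : ℕ) (hN : 1 ≤ N) (ε : ℝ) (hε : 0 < ε) (Mhat : ℕ)
    (hMhat : ∑' k : {k : ℤ // Mhat ≤ k.natAbs}, spec2 (R k.val) ≤ ε / 2)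
    (hNlarge : (N : ℝ) ≥ 2 * Mhat * (∑' k : ℤ, spec2 (R k)) / ε) :
    ∀ s ∈ Set.Icc (-(1:ℝ)/2) (1/2),
      spec2 (Phi R s -
        ∑ k ∈ Finset.Icc (-(N : ℤ) + 1) ((N : ℤ) - 1),
          (((1 - (k.natAbs : ℝ) / N : ℝ) : ℂ) *
              Complex.exp (-(2 * (Real.pi : ℂ) * (s : ℂ) * (k : ℂ)) * Complex.I)) •
            (R k).map (↑· : ℝ → ℂ)) ≤ ε :=
  bias_biased_periodogram_general R hsum N hN ε hε Mhat hMhat hNlarge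
end

section
/- (Bias of the Welch estimator.) Let M ≥ 1 be an integer and let v ∈ ℝ^M have nonnegative entries v[0], …, v[M−1] with v ≠ 0. Define b : ℤ → ℝ by b[k] = (Σ_{i=|k|}^{M−1} v[i−|k|] v[i]) / ‖v‖₂² for |k| < M and b[k] = 0 for |k| ≥ M. Let ε > 0 and let M̂ ∈ ℕ satisfy Σ_{|k| ≥ M̂} ‖R[k]‖₂ ≤ ε/2. If M ≥ M̂ and b[k] ≥ 1 − ε/(2‖R‖₁) for all |k| < M̂, then sup_{s∈[−1/2,1/2]} ‖Φ(s) − Σ_{k=−M+1}^{M−1} e^{−j2πsk} b[k] R[k]‖₂ ≤ ε. -/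
open scoped Matrix.Norms.L2Operator

namespace EuclideanSpace
variable {ι : Type*} [Fintype ι]

lemma norm_sq_eq_norm_sq_re_add_norm_sq_im_s6 (x : EuclideanSpace ℂ ι) :
    ‖x‖ ^ 2 = ‖(WithLp.toLp 2 fun i => (x i).re : EuclideanSpace ℝ ι)‖ ^ 2
      + ‖(WithLp.toLp 2 fun i => (x i).im : EuclideanSpace ℝ ι)‖ ^ 2 := by
  rw [norm_sq_eq, real_norm_sq_eq, real_norm_sq_eq, ← Finset.sum_add_distrib]
  simp only [Complex.sq_norm, Complex.normSq_apply, ← sq]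

end EuclideanSpace

namespace Matrix
variable {m n : Type*} [Fintype m] [Fintype n] [DecidableEq n]

lemma l2_opNorm_map_ofReal_le_s6 (A : Matrix m n ℝ) : ‖A.map ((↑) : ℝ → ℂ)‖ ≤ ‖A‖ := by
  rw [l2_opNorm_def]
  refine ContinuousLinearMap.opNorm_le_bound _ (norm_nonneg A) fun x => ?_
  refine le_of_pow_le_pow_left₀ two_ne_zero (by positivity) ?_
  rw [mul_pow, EuclideanSpace.norm_sq_eq_norm_sq_re_add_norm_sq_im_s6,
    EuclideanSpace.norm_sq_eq_norm_sq_re_add_norm_sq_im_s6 x, mul_add, ← mul_pow, ← mul_pow]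
  have hre := A.l2_opNorm_mulVec (WithLp.toLp 2 fun i => (x i).re)
  have him := A.l2_opNorm_mulVec (WithLp.toLp 2 fun i => (x i).im)
  gcongr
  · refine (le_of_eq ?_).trans hre
    congr 2
    funext i
    simp [mulVec, dotProduct, Complex.re_sum]
  · refine (le_of_eq ?_).trans him
    congr 2
    funext i
    simp [mulVec, dotProduct, Complex.im_sum]

end Matrix

section Window
variable {M : ℕ} (v : Fin M → ℝ) (a : ℕ)

def lagShift (i : Fin M) : ℝ :=
  if a ≤ i.val then v ⟨i.val - a, lt_of_le_of_lt (Nat.sub_le _ _) i.isLt⟩ else 0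

def lagProduct : ℝ :=
  ∑ i : Fin M, if a ≤ i.val then v ⟨i.val - a, lt_of_le_of_lt (Nat.sub_le _ _) i.isLt⟩ * v i
    else 0

lemma lagProduct_eq_sum_lagShift_mul : lagProduct v a = ∑ i, lagShift v a i * v i := by
  simp only [lagProduct, lagShift, ite_zero_mul]

lemma sum_lagShift_sq_le : ∑ i, lagShift v a i ^ 2 ≤ ∑ i, v i ^ 2 := by
  set s := Finset.univ.filter fun i : Fin M => a ≤ i.val
  set σ : Fin M → Fin M := fun i => ⟨i.val - a, lt_of_le_of_lt (Nat.sub_le _ _) i.isLt⟩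
  have hσ : Set.InjOn σ s := fun i hi j hj hij => by
    simp only [s, Finset.mem_coe, Finset.mem_filter, Finset.mem_univ, true_and] at hi hj
    have := congrArg Fin.val hij
    simp only [σ] at this
    omega
  calc ∑ i, lagShift v a i ^ 2 = ∑ i ∈ s, v (σ i) ^ 2 := by
        rw [Finset.sum_filter]
        exact Finset.sum_congr rfl fun i _ => by unfold lagShift; split_ifs <;> simp [σ]
    _ = ∑ j ∈ s.image σ, v j ^ 2 := (Finset.sum_image (f := fun j => v j ^ 2) hσ).symm
    _ ≤ ∑ j, v j ^ 2 :=
        Finset.sum_le_sum_of_subset_of_nonneg (Finset.subset_univ _) fun _ _ _ => sq_nonneg _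

lemma lagProduct_le_sum_sq : lagProduct v a ≤ ∑ i, v i ^ 2 := by
  refine le_of_sq_le_sq ?_ (Finset.sum_nonneg fun i _ => sq_nonneg (v i))
  rw [lagProduct_eq_sum_lagShift_mul, sq (∑ i, v i ^ 2)]
  exact (Finset.sum_mul_sq_le_sq_mul_sq _ _ _).trans
    (mul_le_mul_of_nonneg_right (sum_lagShift_sq_le v a) (Finset.sum_nonneg fun _ _ => sq_nonneg _))

variable {v}

lemma lagProduct_nonneg (hv : ∀ i, 0 ≤ v i) : 0 ≤ lagProduct v a :=
  Finset.sum_nonneg fun _ _ => by split_ifs; exacts [mul_nonneg (hv _) (hv _), le_rfl]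

lemma lagProduct_div_sum_sq_mem_Icc (hv : ∀ i, 0 ≤ v i) :
    lagProduct v a / ∑ i, v i ^ 2 ∈ Set.Icc 0 1 :=
  ⟨div_nonneg (lagProduct_nonneg a hv) (Finset.sum_nonneg fun _ _ => sq_nonneg _),
    div_le_one_of_le₀ (lagProduct_le_sum_sq v a) (Finset.sum_nonneg fun _ _ => sq_nonneg _)⟩

end Window

section WeightedTruncation
variable {ι 𝕜 E : Type*} [RCLike 𝕜] [NormedAddCommGroup E] [NormedSpace 𝕜 E]

lemma norm_sub_ofReal_smul_self (c : ℝ) (x : E) : ‖x - (c : 𝕜) • x‖ = |1 - c| * ‖x‖ := by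
  rw [show x - (c : 𝕜) • x = ((1 - c : ℝ) : 𝕜) • x by
    rw [RCLike.ofReal_sub, RCLike.ofReal_one, sub_smul, one_smul], norm_smul, RCLike.norm_ofReal]

variable [CompleteSpace E]

theorem norm_tsum_sub_sum_smul_le {f : ι → E} {r : ι → ℝ} (hr : Summable r)
    (hfr : ∀ k, ‖f k‖ ≤ r k) {F : Finset ι} {c : ι → ℝ} (hc : ∀ k ∈ F, c k ∈ Set.Icc 0 1)
    {T : Set ι} {δ : ℝ} (hδ : 0 ≤ δ) (hT : ∀ k ∉ T, k ∈ F ∧ 1 - c k ≤ δ) :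
    ‖∑' k, f k - ∑ k ∈ F, (c k : 𝕜) • f k‖ ≤ δ * ∑' k, r k + ∑' k : T, r k := by
  set g := (F : Set ι).indicator fun k => (c k : 𝕜) • f k
  have hg : HasSum g (∑ k ∈ F, (c k : 𝕜) • f k) := hasSum_subtype_iff_indicator.mp (F.hasSum _)
  have hbound : ∀ k, ‖f k - g k‖ ≤ δ * r k + T.indicator r k := by
    intro k
    dsimp only [g]
    have hr : 0 ≤ r k := (norm_nonneg _).trans (hfr k)
    by_cases hkF : k ∈ F
    · obtain ⟨hc0, hc1⟩ := hc k hkF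
      rw [Set.indicator_of_mem (Finset.mem_coe.2 hkF), norm_sub_ofReal_smul_self,
        abs_of_nonneg (sub_nonneg.2 hc1)]
      by_cases hkT : k ∈ T
      · rw [Set.indicator_of_mem hkT]
        nlinarith [hfr k, norm_nonneg (f k)]
      · rw [Set.indicator_of_notMem hkT]
        nlinarith [hfr k, norm_nonneg (f k), (hT k hkT).2]
    · have hkT : k ∈ T := by_contra fun h => hkF (hT k h).1
      rw [Set.indicator_of_notMem (Finset.mem_coe.not.2 hkF), Set.indicator_of_mem hkT, sub_zero]
      nlinarith [hfr k]
  have hB : Summable fun k => δ * r k + T.indicator r k := (hr.mul_left δ).add (hr.indicator T)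
  calc ‖∑' k, f k - ∑ k ∈ F, (c k : 𝕜) • f k‖ = ‖∑' k, (f k - g k)‖ := by
        rw [((Summable.of_norm_bounded hr hfr).hasSum.sub hg).tsum_eq]
    _ ≤ ∑' k, (δ * r k + T.indicator r k) := tsum_of_norm_bounded hB.hasSum hbound
    _ = δ * ∑' k, r k + ∑' k : T, r k := by
        rw [(hr.mul_left δ).tsum_add (hr.indicator T), tsum_mul_left, tsum_subtype]

end WeightedTruncation

theorem bias_welch_general {n : ℕ}
    (R : ℤ → Matrix (Fin n) (Fin n) ℝ)
    (hsum : Summable fun k : ℤ => spec2 (R k))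
    (M : ℕ)
    (v : Fin M → ℝ) (hv : ∀ i, 0 ≤ v i)
    (b : ℤ → ℝ)
    (hbdef : ∀ k : ℤ, b k =
      if k.natAbs < M then
        (∑ i : Fin M, if k.natAbs ≤ i.val then
            v ⟨i.val - k.natAbs, lt_of_le_of_lt (Nat.sub_le _ _) i.isLt⟩ * v i
          else 0) / (∑ i : Fin M, v i ^ 2)
      else 0)
    (ε : ℝ) (Mhat : ℕ)
    (hMhat : ∑' k : {k : ℤ // Mhat ≤ k.natAbs}, spec2 (R k.val) ≤ ε / 2)
    (hMMhat : M ≥ Mhat)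
    (hblarge : ∀ k : ℤ, k.natAbs < Mhat →
      b k ≥ 1 - ε / (2 * ∑' k : ℤ, spec2 (R k))) :
    ∀ s ∈ Set.Icc (-(1:ℝ)/2) (1/2),
      spec2 (Phi R s -
        ∑ k ∈ Finset.Icc (-(M : ℤ) + 1) ((M : ℤ) - 1),
          ((b k : ℂ) *
              Complex.exp (-(2 * (Real.pi : ℂ) * (s : ℂ) * (k : ℂ)) * Complex.I)) •
            (R k).map (↑· : ℝ → ℂ)) ≤ ε := by
  intro s _
  have hS : 0 ≤ ∑' k : ℤ, spec2 (R k) := tsum_nonneg fun k => norm_nonneg (R k)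
  have hε : 0 ≤ ε := by
    have : 0 ≤ ∑' k : {k : ℤ // Mhat ≤ k.natAbs}, spec2 (R k.val) :=
      tsum_nonneg fun k => norm_nonneg _
    linarith
  have hb : ∀ k, b k ∈ Set.Icc 0 1 := fun k => by
    rw [hbdef k]
    split_ifs
    exacts [lagProduct_div_sum_sq_mem_Icc _ hv, ⟨le_rfl, zero_le_one⟩]
  have hphase : ∀ k : ℤ, ‖Complex.exp (-(2 * (Real.pi : ℂ) * (s : ℂ) * (k : ℂ)) * Complex.I)‖ = 1 :=
    fun k => by exact_mod_cast Complex.norm_exp_ofReal_mul_I (-(2 * Real.pi * s * k))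
  have hbias := norm_tsum_sub_sum_smul_le (𝕜 := ℂ) hsum
    (f := fun k : ℤ => Complex.exp (-(2 * (Real.pi : ℂ) * (s : ℂ) * (k : ℂ)) * Complex.I) •
      (R k).map (↑· : ℝ → ℂ))
    (fun k => by rw [norm_smul, hphase, one_mul]; exact (R k).l2_opNorm_map_ofReal_le_s6)
    (F := Finset.Icc (-(M : ℤ) + 1) ((M : ℤ) - 1)) (fun k _ => hb k)
    (T := {k | Mhat ≤ k.natAbs}) (δ := ε / (2 * ∑' k : ℤ, spec2 (R k))) (by positivity)
    (fun k hk => have hkM : k.natAbs < Mhat := not_le.1 hk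
      ⟨Finset.mem_Icc.2 ⟨by omega, by omega⟩, by linarith [hblarge k hkM]⟩)
  have hδS : ε / (2 * ∑' k : ℤ, spec2 (R k)) * ∑' k : ℤ, spec2 (R k) ≤ ε / 2 :=
    calc _ = ε / 2 * ((∑' k : ℤ, spec2 (R k)) / ∑' k : ℤ, spec2 (R k)) := by ring
      _ ≤ ε / 2 := mul_le_of_le_one_right (by positivity) (div_self_le_one _)
  simp only [mul_smul]
  exact hbias.trans ((add_le_add hδS hMhat).trans_eq (add_halves ε))

theorem bias_welch {n : ℕ} (hn : 1 ≤ n)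
    (R : ℤ → Matrix (Fin n) (Fin n) ℝ)
    (hsum : Summable fun k : ℤ => spec2 (R k))
    (hRpos : 0 < ∑' k : ℤ, spec2 (R k))
    (M : ℕ) (hM : 1 ≤ M)
    (v : Fin M → ℝ) (hv : ∀ i, 0 ≤ v i) (hvne : v ≠ 0)
    (b : ℤ → ℝ)
    (hbdef : ∀ k : ℤ, b k =
      if k.natAbs < M then
        (∑ i : Fin M, if k.natAbs ≤ i.val then
            v ⟨i.val - k.natAbs, lt_of_le_of_lt (Nat.sub_le _ _) i.isLt⟩ * v i
          else 0) / (∑ i : Fin M, v i ^ 2)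
      else 0)
    (ε : ℝ) (hε : 0 < ε) (Mhat : ℕ)
    (hMhat : ∑' k : {k : ℤ // Mhat ≤ k.natAbs}, spec2 (R k.val) ≤ ε / 2)
    (hMMhat : M ≥ Mhat)
    (hblarge : ∀ k : ℤ, k.natAbs < Mhat →
      b k ≥ 1 - ε / (2 * ∑' k : ℤ, spec2 (R k))) :
    ∀ s ∈ Set.Icc (-(1:ℝ)/2) (1/2),
      spec2 (Phi R s -
        ∑ k ∈ Finset.Icc (-(M : ℤ) + 1) ((M : ℤ) - 1),
          ((b k : ℂ) *
              Complex.exp (-(2 * (Real.pi : ℂ) * (s : ℂ) * (k : ℂ)) * Complex.I)) •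
            (R k).map (↑· : ℝ → ℂ)) ≤ ε :=
  bias_welch_general R hsum M v hv b hbdef ε Mhat hMhat hMMhat hblarge
end

section
/- (Norm bounds for the Welch matrix.) Let S, K, M be positive integers, let N = (S−1)K + M, and let v ∈ ℝ^M be a unit vector (‖v‖₂ = 1). For i = 0, …, S−1 let u_i ∈ ℝ^N be the vector with entries u_i[iK + j] = v[j] for j = 0, …, M−1 and all other entries zero, and set A = (1/S) Σ_{i=0}^{S−1} u_i u_iᵀ ∈ ℝ^{N×N}. Then ‖A‖₂ ≤ ⌈M/K⌉ / S and ‖A‖_F² ≤ (S + 2(S−1)(⌈M/K⌉ − 1)) / S². -/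
/-- The Frobenius norm of a matrix. -/
noncomputable def frob2 {𝕜 m n : Type*} [RCLike 𝕜] [Fintype m] [Fintype n]
    (M : Matrix m n 𝕜) : ℝ :=
  Real.sqrt (∑ i, ∑ j, ‖M i j‖ ^ 2)

/-!
Write `A = S⁻¹ • UᵀU`, where `U` is the `S × N` matrix with rows `u_i`, and let `T = ⌈M/K⌉`.
Every coordinate lies in at most `T` of the windows `[iK, iK + M)`, so Cauchy–Schwarz on each
window gives `‖U x‖² ≤ T ‖x‖²`; hence `‖UᵀU‖₂ = ‖U‖₂² ≤ T`. For the Frobenius norm,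
`‖UᵀU‖_F = ‖UUᵀ‖_F`, and the Gram matrix `UUᵀ` of the unit vectors `u_i` has entries of size
at most `1` that vanish once `|i - j| ≥ T` (the windows are then disjoint), so it is supported
on a band of at most `S + 2(S - 1)(T - 1)` entries.
-/

open Finset Matrix
open scoped Matrix.Norms.L2Operator

section Gram

variable {m n : Type*} [Fintype m] [Fintype n]

lemma l2_opNorm_le_sqrt_of_sum_sq_mulVec_le [DecidableEq n] (U : Matrix m n ℝ) {c : ℝ}
    (h : ∀ x, ∑ i, (U *ᵥ x) i ^ 2 ≤ c * ∑ p, x p ^ 2) : ‖U‖ ≤ √c := by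
  rw [l2_opNorm_def]
  refine ContinuousLinearMap.opNorm_le_bound _ (Real.sqrt_nonneg c) fun x => ?_
  rw [EuclideanSpace.norm_eq, EuclideanSpace.norm_eq, ← Real.sqrt_mul' _ (by positivity)]
  simp only [Real.norm_eq_abs, sq_abs]
  exact Real.sqrt_le_sqrt (h x)

lemma l2_opNorm_transpose_mul_self_le [DecidableEq n] (U : Matrix m n ℝ) {c : ℝ} (hc : 0 ≤ c)
    (h : ∀ x, ∑ i, (U *ᵥ x) i ^ 2 ≤ c * ∑ p, x p ^ 2) : ‖Uᵀ * U‖ ≤ c := by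
  rw [← conjTranspose_eq_transpose_of_trivial, l2_opNorm_conjTranspose_mul_self, ← sq,
    ← Real.sq_sqrt hc]
  exact pow_le_pow_left₀ (norm_nonneg U) (l2_opNorm_le_sqrt_of_sum_sq_mulVec_le U h) 2

lemma sum_sq_apply_eq_trace_mul_transpose (B : Matrix m n ℝ) :
    ∑ i, ∑ j, B i j ^ 2 = trace (B * Bᵀ) := by
  simp only [trace, Matrix.diag, mul_apply, transpose_apply, sq]

lemma sum_sq_transpose_mul_self (U : Matrix m n ℝ) :
    ∑ p, ∑ q, (Uᵀ * U) p q ^ 2 = ∑ i, ∑ j, (U * Uᵀ) i j ^ 2 := by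
  rw [sum_sq_apply_eq_trace_mul_transpose, sum_sq_apply_eq_trace_mul_transpose]
  simp only [transpose_mul, transpose_transpose, Matrix.mul_assoc]
  rw [trace_mul_comm]
  simp only [Matrix.mul_assoc]

end Gram

section Support

variable {ι n : Type*} [Fintype ι] [Fintype n]

lemma sq_dotProduct_le_of_support {a : n → ℝ} {W : Finset n} (ha : ∀ p ∉ W, a p = 0)
    (x : n → ℝ) : (a ⬝ᵥ x) ^ 2 ≤ (∑ p, a p ^ 2) * ∑ p ∈ W, x p ^ 2 := by
  have hdot : a ⬝ᵥ x = ∑ p ∈ W, a p * x p :=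
    (sum_subset (subset_univ W) fun p _ hp => by rw [ha p hp, zero_mul]).symm
  have hsq : ∑ p ∈ W, a p ^ 2 = ∑ p, a p ^ 2 :=
    sum_subset (subset_univ W) fun p _ hp => by rw [ha p hp, sq, zero_mul]
  rw [hdot, ← hsq]
  exact sum_mul_sq_le_sq_mul_sq W a x

lemma sum_sq_dotProduct_le_of_support [DecidableEq n] {u : ι → n → ℝ} {W : ι → Finset n}
    (hu : ∀ i, ∀ p ∉ W i, u i p = 0) (hnorm : ∀ i, ∑ p, u i p ^ 2 ≤ 1) {T : ℕ}
    (hT : ∀ p, #{i | p ∈ W i} ≤ T) (x : n → ℝ) :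
    ∑ i, (u i ⬝ᵥ x) ^ 2 ≤ T * ∑ p, x p ^ 2 := by
  have hrow (i : ι) : (u i ⬝ᵥ x) ^ 2 ≤ ∑ p ∈ W i, x p ^ 2 :=
    (sq_dotProduct_le_of_support (hu i) x).trans <|
      mul_le_of_le_one_left (sum_nonneg fun p _ => sq_nonneg _) (hnorm i)
  calc ∑ i, (u i ⬝ᵥ x) ^ 2 ≤ ∑ i, ∑ p ∈ W i, x p ^ 2 := sum_le_sum fun i _ => hrow i
    _ = ∑ p, (#{i | p ∈ W i} : ℝ) * x p ^ 2 := by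
      have hind (i : ι) : ∑ p ∈ W i, x p ^ 2 = ∑ p, if p ∈ W i then x p ^ 2 else 0 := by
        rw [sum_ite_mem, univ_inter]
      simp_rw [hind]
      rw [sum_comm]
      simp_rw [← sum_filter, sum_const, nsmul_eq_mul]
    _ ≤ T * ∑ p, x p ^ 2 := by
      rw [mul_sum]
      exact sum_le_sum fun p _ =>
        mul_le_mul_of_nonneg_right (by exact_mod_cast hT p) (sq_nonneg _)

lemma dotProduct_eq_zero_of_disjoint {a b : n → ℝ} {V W : Finset n} (ha : ∀ p ∉ V, a p = 0)
    (hb : ∀ p ∉ W, b p = 0) (h : Disjoint V W) : a ⬝ᵥ b = 0 := by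
  refine sum_eq_zero fun p _ => ?_
  by_cases hp : p ∈ V
  · rw [hb p (disjoint_left.1 h hp), mul_zero]
  · rw [ha p hp, zero_mul]

end Support

lemma card_upper_band_le (S T : ℕ) :
    #{q : Fin S × Fin S | q.1.val < q.2.val ∧ q.2.val < q.1.val + T} ≤ (S - 1) * (T - 1) := by
  refine (card_le_card_of_injOn (t := range (S - 1) ×ˢ range (T - 1))
    (fun q => (q.1.val, q.2.val - q.1.val - 1)) (fun q hq => ?_) fun a ha b hb hab => ?_).trans
    (by simp)
  · simp only [coe_filter, mem_univ, true_and, Set.mem_ofPred_eq] at hq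
    simp only [coe_product, coe_range, Set.mem_prod, Set.mem_Iio]
    omega
  · simp only [coe_filter, mem_univ, true_and, Set.mem_ofPred_eq] at ha hb
    simp only [Prod.mk.injEq] at hab
    ext <;> omega

lemma card_band_le (S T : ℕ) :
    #{q : Fin S × Fin S | q.1.val < q.2.val + T ∧ q.2.val < q.1.val + T}
      ≤ S + 2 * ((S - 1) * (T - 1)) := by
  set upper : Finset (Fin S × Fin S) := {q | q.1.val < q.2.val ∧ q.2.val < q.1.val + T}
  set lower : Finset (Fin S × Fin S) := {q | q.2.val < q.1.val ∧ q.1.val < q.2.val + T}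
  have hlower : #lower ≤ #upper :=
    card_le_card_of_injOn Prod.swap (fun q hq => by simp_all [lower, upper])
      Prod.swap_injective.injOn
  have hcover : ({q | q.1.val < q.2.val + T ∧ q.2.val < q.1.val + T} : Finset (Fin S × Fin S))
      ⊆ univ.diag ∪ upper ∪ lower := by
    intro q hq
    simp only [mem_filter, mem_union, mem_univ, true_and, mem_diag, upper, lower,
      Fin.ext_iff] at hq ⊢
    omega
  calc _ ≤ #(univ.diag ∪ upper ∪ lower) := card_le_card hcover
    _ ≤ #(univ : Finset (Fin S)).diag + #upper + #lower :=
      (card_union_le _ _).trans (Nat.add_le_add_right (card_union_le _ _) _)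
    _ ≤ S + 2 * ((S - 1) * (T - 1)) := by
      have : #upper ≤ _ := card_upper_band_le S T
      rw [diag_card, card_univ, Fintype.card_fin]
      omega

lemma sum_sq_le_of_band {S T : ℕ} (G : Matrix (Fin S) (Fin S) ℝ) (hG : ∀ i j, G i j ^ 2 ≤ 1)
    (hband : ∀ i j : Fin S, j.val + T ≤ i.val ∨ i.val + T ≤ j.val → G i j = 0) :
    ∑ i, ∑ j, G i j ^ 2 ≤ ((S + 2 * ((S - 1) * (T - 1)) : ℕ) : ℝ) := by
  have hentry (i j : Fin S) :
      G i j ^ 2 ≤ if i.val < j.val + T ∧ j.val < i.val + T then 1 else 0 := by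
    split_ifs with h
    · exact hG i j
    · rw [hband i j (by omega), sq, zero_mul]
  calc ∑ i, ∑ j, G i j ^ 2
      ≤ ∑ q : Fin S × Fin S, if q.1.val < q.2.val + T ∧ q.2.val < q.1.val + T then 1 else 0 := by
        rw [Fintype.sum_prod_type]
        exact sum_le_sum fun i _ => sum_le_sum fun j _ => hentry i j
    _ ≤ _ := by
      rw [sum_boole]
      exact_mod_cast card_band_le S T

section Window

variable {K M N : ℕ}

def window (K M N i : ℕ) : Finset (Fin N) := {p | i * K ≤ p.val ∧ p.val < i * K + M}

def windowShift (K : ℕ) (v : Fin M → ℝ) (N i : ℕ) (p : Fin N) : ℝ :=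
  if h : i * K ≤ p.val ∧ p.val < i * K + M then v ⟨p.val - i * K, by omega⟩ else 0

lemma windowShift_eq_zero_of_notMem {v : Fin M → ℝ} {i : ℕ} {p : Fin N}
    (hp : p ∉ window K M N i) : windowShift K v N i p = 0 :=
  dif_neg (by simpa [window] using hp)

lemma sum_sq_windowShift (v : Fin M → ℝ) {i : ℕ} (h : i * K + M ≤ N) :
    ∑ p, windowShift K v N i p ^ 2 = ∑ j, v j ^ 2 := by
  refine (sum_of_injOn (fun j : Fin M => (⟨i * K + j, by omega⟩ : Fin N)) ?_ ?_ ?_ ?_).symm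
  · intro a _ b _ hab
    simp only [Fin.mk.injEq] at hab
    exact Fin.ext (by omega)
  · exact fun _ _ => mem_coe.2 (mem_univ _)
  · intro p _ hp
    rw [windowShift, dif_neg, sq, zero_mul]
    rintro ⟨hlo, hhi⟩
    exact hp ⟨⟨p.val - i * K, by omega⟩, mem_coe.2 (mem_univ _), Fin.ext (by simp; omega)⟩
  · intro j _
    rw [windowShift, dif_pos (by simp)]
    simp

lemma card_mem_window_le {S T : ℕ} (hK : 0 < K) (hTK : M ≤ T * K) (p : Fin N) :
    #{i : Fin S | p ∈ window K M N i} ≤ T := by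
  refine (card_le_card_of_injOn (t := Ico (p.val / K + 1 - T) (p.val / K + 1)) Fin.val
    (fun i hi => ?_) Fin.val_injective.injOn).trans (by rw [Nat.card_Ico]; omega)
  simp only [coe_filter, mem_univ, true_and, Set.mem_ofPred_eq, window, mem_filter] at hi
  have hle : i.val ≤ p.val / K := (Nat.le_div_iff_mul_le hK).2 hi.1
  have hlt : p.val / K < i.val + T := by
    rw [Nat.div_lt_iff_lt_mul hK, add_mul]
    omega
  simp only [coe_Ico, Set.mem_Ico]
  omega

lemma disjoint_window {T i j : ℕ} (hTK : M ≤ T * K) (h : j + T ≤ i) :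
    Disjoint (window K M N i) (window K M N j) := by
  have : (j + T) * K ≤ i * K := Nat.mul_le_mul_right K h
  rw [disjoint_left]
  intro p hpi hpj
  simp only [window, mem_filter, mem_univ, true_and] at hpi hpj
  rw [add_mul] at this
  omega

def windowMatrix (S K : ℕ) (v : Fin M → ℝ) (N : ℕ) : Matrix (Fin S) (Fin N) ℝ :=
  of fun i : Fin S => windowShift K v N i

variable {S : ℕ} {v : Fin M → ℝ}

lemma sum_sq_windowMatrix_row (hv : ∑ j, v j ^ 2 = 1) (hN : (S - 1) * K + M ≤ N) (i : Fin S) :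
    ∑ p, windowMatrix S K v N i p ^ 2 = 1 := by
  have := Nat.mul_le_mul_right K (Nat.le_sub_one_of_lt i.isLt)
  rw [← hv]
  exact sum_sq_windowShift v (by omega)

lemma l2_opNorm_transpose_mul_windowMatrix_le {T : ℕ} (hK : 0 < K) (hTK : M ≤ T * K)
    (hv : ∑ j, v j ^ 2 = 1) (hN : (S - 1) * K + M ≤ N) :
    ‖(windowMatrix S K v N)ᵀ * windowMatrix S K v N‖ ≤ T :=
  l2_opNorm_transpose_mul_self_le _ T.cast_nonneg <|
    sum_sq_dotProduct_le_of_support (fun _ _ => windowShift_eq_zero_of_notMem)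
      (fun i => (sum_sq_windowMatrix_row hv hN i).le) (card_mem_window_le hK hTK)

lemma sum_sq_windowMatrix_mul_transpose_le {T : ℕ} (hTK : M ≤ T * K)
    (hv : ∑ j, v j ^ 2 = 1) (hN : (S - 1) * K + M ≤ N) :
    ∑ i, ∑ j, (windowMatrix S K v N * (windowMatrix S K v N)ᵀ) i j ^ 2
      ≤ ((S + 2 * ((S - 1) * (T - 1)) : ℕ) : ℝ) := by
  refine sum_sq_le_of_band _ (fun i j => ?_) fun i j hij => ?_
  · have hcs := sum_mul_sq_le_sq_mul_sq univ (windowMatrix S K v N i) (windowMatrix S K v N j)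
    rw [sum_sq_windowMatrix_row hv hN, sum_sq_windowMatrix_row hv hN, one_mul] at hcs
    simpa only [mul_apply, transpose_apply] using hcs
  · have hsupp (k : Fin S) : ∀ p ∉ window K M N k, windowMatrix S K v N k p = 0 :=
      fun _ => windowShift_eq_zero_of_notMem
    rcases hij with hij | hij
    · exact dotProduct_eq_zero_of_disjoint (hsupp i) (hsupp j) (disjoint_window hTK hij)
    · exact dotProduct_eq_zero_of_disjoint (hsupp i) (hsupp j) (disjoint_window hTK hij).symm

end Window

lemma frob2_sq_eq_sum_sq {m n : Type*} [Fintype m] [Fintype n] (B : Matrix m n ℝ) :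
    frob2 B ^ 2 = ∑ i, ∑ j, B i j ^ 2 := by
  rw [frob2, Real.sq_sqrt (by positivity)]
  simp only [Real.norm_eq_abs, sq_abs]

theorem welch_matrix_norms (S K M N : ℕ) (hS : 1 ≤ S) (hK : 1 ≤ K) (hM : 1 ≤ M)
    (hN : N = (S - 1) * K + M)
    (v : Fin M → ℝ) (hv : Real.sqrt (∑ i, v i ^ 2) = 1)
    (u : Fin S → Fin N → ℝ)
    (hu : ∀ (i : Fin S) (p : Fin N), u i p =
      if h : i.val * K ≤ p.val ∧ p.val < i.val * K + M then
        v ⟨p.val - i.val * K, by omega⟩ else 0)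
    (A : Matrix (Fin N) (Fin N) ℝ)
    (hA : A = (S : ℝ)⁻¹ • ∑ i : Fin S, Matrix.of fun p q => u i p * u i q) :
    spec2 A ≤ ((⌈(M : ℝ) / (K : ℝ)⌉ : ℤ) : ℝ) / S ∧
      frob2 A ^ 2 ≤
        ((S : ℝ) + 2 * ((S : ℝ) - 1) * (((⌈(M : ℝ) / (K : ℝ)⌉ : ℤ) : ℝ) - 1)) / (S : ℝ) ^ 2 := by
  obtain rfl : u = windowMatrix S K v N := funext₂ hu
  set U := windowMatrix S K v N
  set T := ⌈(M : ℝ) / K⌉₊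
  have hTK : M ≤ T * K := by
    have h := Nat.le_ceil ((M : ℝ) / K)
    rw [div_le_iff₀ (by positivity)] at h
    exact_mod_cast h
  have hT : 1 ≤ T := Nat.one_le_ceil_iff.2 (by positivity)
  have hv' : ∑ j, v j ^ 2 = 1 := Real.sqrt_eq_one.1 hv
  have hA' : A = (S : ℝ)⁻¹ • (Uᵀ * U) := by
    rw [hA]
    ext p q
    simp [Matrix.mul_apply, Matrix.sum_apply]
  rw [← natCast_ceil_eq_intCast_ceil (by positivity), hA']
  constructor
  · change ‖(S : ℝ)⁻¹ • (Uᵀ * U)‖ ≤ T / S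
    rw [norm_smul, norm_inv, Real.norm_natCast, inv_mul_eq_div]
    gcongr
    exact l2_opNorm_transpose_mul_windowMatrix_le hK hTK hv' hN.ge
  · rw [frob2_sq_eq_sum_sq]
    simp only [Matrix.smul_apply, smul_eq_mul, mul_pow, ← mul_sum]
    rw [sum_sq_transpose_mul_self, inv_pow, inv_mul_eq_div]
    gcongr
    refine (sum_sq_windowMatrix_mul_transpose_le hTK hv' hN.ge).trans_eq ?_
    push_cast [Nat.cast_sub hS, Nat.cast_sub hT]
    ring
end

section
/- (Frequency grid approximation for matrix trigonometric polynomials.) Let n ≥ 1 and N̂ ≥ 1 be integers, and let C : ℤ → ℂ^{n×n} satisfy C[k] = 0 for |k| ≥ N̂. Define M(s) = Σ_{k=−N̂+1}^{N̂−1} e^{−j2πsk} C[k]. Then for all real s and ŝ with |s − ŝ| ≤ 1/(2π N̂²), ‖M(s)‖₂ ≤ ‖M(ŝ)‖₂ + max_{|k| < N̂} ‖C[k]‖₂. -/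
open Complex Finset

theorem Complex.norm_exp_ofReal_mul_I_sub_exp_ofReal_mul_I_le (x y : ℝ) :
    ‖exp (x * I) - exp (y * I)‖ ≤ |x - y| := by
  have hfactor : exp (x * I) - exp (y * I) = exp (y * I) * (exp (I * ↑(x - y)) - 1) := by
    rw [mul_sub, ← exp_add]
    push_cast
    ring_nf
  rw [hfactor, norm_mul, norm_exp_ofReal_mul_I, one_mul]
  exact Real.norm_exp_I_mul_ofReal_sub_one_le

theorem norm_sum_exp_smul_sub_sum_exp_smul_le {ι E : Type*} [SeminormedAddCommGroup E]
    [NormedSpace ℂ E] (F : Finset ι) (ω : ι → ℝ) (c : ι → E) (s t : ℝ) :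
    ‖∑ k ∈ F, exp (↑(ω k * s) * I) • c k - ∑ k ∈ F, exp (↑(ω k * t) * I) • c k‖ ≤
      |s - t| * ∑ k ∈ F, |ω k| * ‖c k‖ := by
  rw [← sum_sub_distrib, mul_sum]
  refine (norm_sum_le _ _).trans (sum_le_sum fun k _ => ?_)
  rw [← sub_smul, norm_smul, ← mul_assoc, mul_comm |s - t|, ← abs_mul, mul_sub]
  gcongr
  exact norm_exp_ofReal_mul_I_sub_exp_ofReal_mul_I_le _ _

theorem Int.sum_Icc_neg_abs (m : ℕ) : ∑ k ∈ Icc (-(m : ℤ)) m, |k| = m * (m + 1) := by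
  induction m with
  | zero => simp
  | succ m ih =>
    have hIcc : Icc (-((m + 1 : ℕ) : ℤ)) (m + 1 : ℕ) =
        insert (-((m + 1 : ℕ) : ℤ)) (insert ((m + 1 : ℕ) : ℤ) (Icc (-(m : ℤ)) m)) := by
      ext x; simp only [mem_Icc, mem_insert]; omega
    rw [hIcc, sum_insert (by simp only [mem_insert, mem_Icc]; omega),
      sum_insert (by simp only [mem_Icc]; omega), ih,
      abs_of_nonpos (by omega), abs_of_nonneg (by omega)]
    push_cast; ring

theorem sum_abs_mul_le_sq_mul (N : ℕ) {a : ℤ → ℝ} {B : ℝ} (hB : 0 ≤ B)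
    (ha : ∀ k ∈ Icc (-(N : ℤ) + 1) (N - 1), a k ≤ B) :
    ∑ k ∈ Icc (-(N : ℤ) + 1) (N - 1), |(k : ℝ)| * a k ≤ N ^ 2 * B := by
  obtain _ | m := N
  · simp
  have hIcc : Icc (-((m + 1 : ℕ) : ℤ) + 1) ((m + 1 : ℕ) - 1) = Icc (-(m : ℤ)) m := by
    ext; simp only [mem_Icc]; omega
  have hsum : ∑ k ∈ Icc (-(m : ℤ)) m, |(k : ℝ)| = m * (m + 1) := by
    exact_mod_cast Int.sum_Icc_neg_abs m
  calc _ ≤ ∑ k ∈ Icc (-((m + 1 : ℕ) : ℤ) + 1) ((m + 1 : ℕ) - 1), |(k : ℝ)| * B :=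
        sum_le_sum fun k hk => mul_le_mul_of_nonneg_left (ha k hk) (abs_nonneg _)
    _ = m * (m + 1) * B := by rw [← sum_mul, hIcc, hsum]
    _ ≤ ((m + 1 : ℕ) : ℝ) ^ 2 * B := by push_cast; gcongr; nlinarith

theorem frequency_grid_approximation {n Nhat : ℕ} (hNhat : 1 ≤ Nhat)
    (C : ℤ → Matrix (Fin n) (Fin n) ℂ)
    (Mf : ℝ → Matrix (Fin n) (Fin n) ℂ)
    (hMf : ∀ s : ℝ, Mf s = ∑ k ∈ Finset.Icc (-(Nhat : ℤ) + 1) ((Nhat : ℤ) - 1),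
        Complex.exp (-(2 * (Real.pi : ℂ) * (s : ℂ) * (k : ℂ)) * Complex.I) • C k)
    (s shat : ℝ) (hss : |s - shat| ≤ 1 / (2 * Real.pi * (Nhat : ℝ) ^ 2)) :
    spec2 (Mf s) ≤ spec2 (Mf shat) +
      (Finset.Icc (-(Nhat : ℤ) + 1) ((Nhat : ℤ) - 1)).sup'
        (Finset.nonempty_Icc.mpr (by omega)) (fun k => spec2 (C k)) := by
  let _ := Matrix.instL2OpNormedAddCommGroup (𝕜 := ℂ) (m := Fin n) (n := Fin n)
  let _ := Matrix.instL2OpNormedSpace (𝕜 := ℂ) (m := Fin n) (n := Fin n)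
  set F := Icc (-(Nhat : ℤ) + 1) ((Nhat : ℤ) - 1)
  set B := F.sup' (nonempty_Icc.mpr (by omega)) (fun k => spec2 (C k))
  have hCB : ∀ k ∈ F, ‖C k‖ ≤ B := fun k hk => F.le_sup' (fun k => spec2 (C k)) hk
  have hM : ∀ s : ℝ, Mf s = ∑ k ∈ F, exp (↑(-2 * Real.pi * k * s) * I) • C k := fun s => by
    rw [hMf]; refine sum_congr rfl fun k _ => ?_; push_cast; ring_nf
  have hB : 0 ≤ B := (norm_nonneg _).trans (hCB 0 (by simp [F]; omega))
  have hdiff : ‖Mf s - Mf shat‖ ≤ B := calc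
    _ ≤ |s - shat| * ∑ k ∈ F, |-2 * Real.pi * k| * ‖C k‖ := by
      rw [hM, hM]; exact norm_sum_exp_smul_sub_sum_exp_smul_le F _ C s shat
    _ = |s - shat| * (2 * Real.pi * ∑ k ∈ F, |(k : ℝ)| * ‖C k‖) := by
      simp_rw [abs_mul, abs_neg, abs_two, abs_of_pos Real.pi_pos, mul_assoc, ← mul_sum]
    _ ≤ |s - shat| * (2 * Real.pi * (Nhat ^ 2 * B)) := by
      gcongr; exact sum_abs_mul_le_sq_mul Nhat hB hCB
    _ = |s - shat| * (2 * Real.pi * Nhat ^ 2) * B := by ring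
    _ ≤ B := mul_le_of_le_one_left hB ((le_div_iff₀ (by positivity)).mp hss)
  exact (norm_le_norm_add_norm_sub' (Mf s) (Mf shat)).trans (add_le_add_right hdiff _)
end

section
/- (Concentration for weighted sums of centered squares.) Let n ≥ 1, let b > 0, and let x₁, …, xₙ be independent real random variables with E[xᵢ] = 0 and E[exp(xᵢ²/b²)] ≤ 2 for all i. Let a = (a₁, …, aₙ) ∈ ℝⁿ with a ≠ 0. Then for all t ≥ 0, P( Σ_{i=1}^n aᵢ (xᵢ² − E[xᵢ²]) > t ) ≤ exp( −(1/64) · min{ t² / (b⁴ ‖a‖₂²), t / (b² ‖a‖_∞) } ). -/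
/-!
The variables `W i = x i ^ 2 / b ^ 2` are nonnegative with `E[exp W i] ≤ 2`. The elementary
bound `exp (s w) ≤ 1 + s w + 4 s² exp w` (for `w ≥ 0`, `|s| ≤ 1/2`) makes them sub-exponential
after centring: `E[exp (s (W i - E W i))] ≤ exp (8 s²)`. By independence the weighted sum has
moment generating function at most `exp (8 s² b⁴ ‖a‖₂²)` for `0 ≤ s ≤ 1 / (2 b² ‖a‖_∞)`, and
Chernoff's bound at `s = min (t / (16 b⁴ ‖a‖₂²)) (1 / (2 b² ‖a‖_∞))` gives the tail estimate.
-/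

open Real

namespace Real

lemma exp_sub_one_sub_le_sq_mul_exp_abs (u : ℝ) : exp u - 1 - u ≤ u ^ 2 * exp |u| := by
  rcases le_or_gt |u| 1 with hu | hu
  · calc exp u - 1 - u ≤ u ^ 2 := (abs_le.mp (abs_exp_sub_one_sub_id_le hu)).2
      _ ≤ u ^ 2 * exp |u| := le_mul_of_one_le_right (sq_nonneg u) (one_le_exp (abs_nonneg u))
  · have h1 : 1 ≤ u ^ 2 := by nlinarith [sq_abs u]
    calc exp u - 1 - u ≤ exp |u| := by
          rcases le_total 0 u with h | h
          · rw [abs_of_nonneg h]; linarith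
          · rw [abs_of_nonpos h]; linarith [exp_le_one_iff.mpr h, add_one_le_exp (-u)]
      _ ≤ u ^ 2 * exp |u| := le_mul_of_one_le_left (exp_pos _).le h1

lemma sq_le_exp_of_nonneg {v : ℝ} (hv : 0 ≤ v) : v ^ 2 ≤ exp v := by
  have h := sum_le_exp_of_nonneg hv 4
  simp only [Finset.sum_range_succ, Finset.sum_range_zero, Nat.factorial] at h
  norm_num at h
  nlinarith [sq_nonneg (v - 1), mul_nonneg hv (sq_nonneg (v - 2))]

lemma exp_mul_le_one_add_mul_add_sq_mul_exp {s w : ℝ} (hw : 0 ≤ w) (hs : |s| ≤ 1 / 2) :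
    exp (s * w) ≤ 1 + s * w + 4 * s ^ 2 * exp w := by
  have hw2 : w ^ 2 ≤ 4 * exp (w / 2) := by
    nlinarith [sq_le_exp_of_nonneg (div_nonneg hw zero_le_two)]
  have hexp : exp |s * w| ≤ exp (w / 2) := by
    rw [exp_le_exp, abs_mul, abs_of_nonneg hw]; nlinarith
  calc exp (s * w) ≤ 1 + s * w + (s * w) ^ 2 * exp |s * w| := by
        linarith [exp_sub_one_sub_le_sq_mul_exp_abs (s * w)]
    _ ≤ 1 + s * w + s ^ 2 * (4 * exp (w / 2) * exp (w / 2)) := by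
        rw [mul_pow, mul_assoc (s ^ 2)]
        gcongr 1 + s * w + s ^ 2 * ?_
        exact mul_le_mul hw2 hexp (exp_pos _).le (by positivity)
    _ = 1 + s * w + 4 * s ^ 2 * exp w := by
        rw [← add_halves w, exp_add, add_halves]; ring

lemma min_div_two_le_mul_sub_mul_sq {ν β t : ℝ} (hν : 0 ≤ ν) (hβ : 0 ≤ β) (ht : 0 ≤ t) :
    min (t ^ 2 / ν) (t / β) / 2 ≤ min (t / ν) β⁻¹ * t - ν * min (t / ν) β⁻¹ ^ 2 / 2 := by
  set s := min (t / ν) β⁻¹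
  have hs : 0 ≤ s := le_min (by positivity) (by positivity)
  have hνs : ν * s ≤ t :=
    (mul_le_mul_of_nonneg_left (min_le_left _ _) hν).trans <| by
      rw [mul_div_left_comm]; exact mul_le_of_le_one_right ht (div_self_le_one ν)
  have hst : s * t = min (t ^ 2 / ν) (t / β) := by
    rw [min_mul_of_nonneg _ _ ht, div_mul_eq_mul_div, ← sq, inv_mul_eq_div]
  nlinarith [mul_le_mul_of_nonneg_left hνs hs]

lemma abs_mul_le_half_of_le_inv {s c m : ℝ} (hs0 : 0 ≤ s) (hs : s ≤ (2 * m)⁻¹) (hc : |c| ≤ m) :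
    |s * c| ≤ 1 / 2 := by
  have hm : 0 ≤ m := (abs_nonneg c).trans hc
  rw [abs_mul, abs_of_nonneg hs0]
  calc s * |c| ≤ (2 * m)⁻¹ * m := mul_le_mul hs hc (abs_nonneg c) (by positivity)
    _ = 2⁻¹ * (m * m⁻¹) := by rw [mul_inv]; ring
    _ ≤ 1 / 2 := by rw [one_div]; exact mul_le_of_le_one_right (by norm_num) mul_inv_le_one

end Real

open MeasureTheory ProbabilityTheory

section

variable {Ω : Type*} [MeasurableSpace Ω] {μ : Measure Ω}

lemma integrable_and_integral_le_of_lintegral_ofReal_le {f : Ω → ℝ} (hf : 0 ≤ᵐ[μ] f)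
    (hfm : AEStronglyMeasurable f μ) {C : ENNReal} (hC : C ≠ ⊤)
    (h : ∫⁻ ω, ENNReal.ofReal (f ω) ∂μ ≤ C) : Integrable f μ ∧ ∫ ω, f ω ∂μ ≤ C.toReal := by
  refine ⟨⟨hfm, (hasFiniteIntegral_iff_ofReal hf).2 (h.trans_lt hC.lt_top)⟩, ?_⟩
  rw [integral_eq_lintegral_of_nonneg_ae hf hfm]
  exact ENNReal.toReal_mono hC h

lemma integrable_exp_mul_of_le_one {W : Ω → ℝ} (hW : 0 ≤ᵐ[μ] W)
    (hexp : Integrable (fun ω => exp (W ω)) μ) {s : ℝ} (hs : s ≤ 1) :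
    Integrable (fun ω => exp (s * W ω)) μ := by
  have hWm : AEMeasurable W μ := aemeasurable_of_aemeasurable_exp hexp.aemeasurable
  refine hexp.mono' (hWm.const_mul s).exp.aestronglyMeasurable ?_
  filter_upwards [hW] with ω hω
  rw [norm_of_nonneg (exp_pos _).le, exp_le_exp]
  rcases le_total 0 s with h | h
  · exact mul_le_of_le_one_left hω hs
  · exact (mul_nonpos_of_nonpos_of_nonneg h hω).trans hω

lemma integrable_of_integrable_exp {W : Ω → ℝ} (hW : 0 ≤ᵐ[μ] W)
    (hexp : Integrable (fun ω => exp (W ω)) μ) : Integrable W μ := by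
  refine hexp.mono' (aemeasurable_of_aemeasurable_exp hexp.aemeasurable).aestronglyMeasurable ?_
  filter_upwards [hW] with ω hω
  rw [norm_of_nonneg hω]
  linarith [add_one_le_exp (W ω)]

lemma measureReal_ge_le_exp_neg_min_of_mgf_le [IsFiniteMeasure μ] {X : Ω → ℝ} {ν β t : ℝ}
    (hν : 0 ≤ ν) (hβ : 0 ≤ β) (ht : 0 ≤ t)
    (hX : ∀ s, 0 ≤ s → s ≤ β⁻¹ →
      Integrable (fun ω => exp (s * X ω)) μ ∧ mgf X μ s ≤ exp (ν * s ^ 2 / 2)) :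
    μ.real {ω | t ≤ X ω} ≤ exp (-(min (t ^ 2 / ν) (t / β) / 2)) := by
  set s := min (t / ν) β⁻¹
  have hs0 : 0 ≤ s := le_min (by positivity) (by positivity)
  obtain ⟨hint, hmgf⟩ := hX s hs0 (min_le_right _ _)
  calc μ.real {ω | t ≤ X ω} ≤ exp (-s * t) * mgf X μ s := measure_ge_le_exp_mul_mgf t hs0 hint
    _ ≤ exp (-s * t) * exp (ν * s ^ 2 / 2) := by gcongr
    _ = exp (-(s * t - ν * s ^ 2 / 2)) := by rw [← exp_add]; ring_nf
    _ ≤ exp (-(min (t ^ 2 / ν) (t / β) / 2)) := by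
        gcongr; exact min_div_two_le_mul_sub_mul_sq hν hβ ht

variable [IsProbabilityMeasure μ]

lemma mgf_le_one_add_mul_integral_add {W : Ω → ℝ} (hW : 0 ≤ᵐ[μ] W)
    (hexp : Integrable (fun ω => exp (W ω)) μ) {s : ℝ} (hs : |s| ≤ 1 / 2) :
    mgf W μ s ≤ 1 + s * μ[W] + 4 * s ^ 2 * ∫ ω, exp (W ω) ∂μ := by
  have hWi := integrable_of_integrable_exp hW hexp
  have hlin : Integrable (fun ω => 1 + s * W ω) μ := (integrable_const 1).add (hWi.const_mul s)
  calc mgf W μ s ≤ ∫ ω, (1 + s * W ω + 4 * s ^ 2 * exp (W ω)) ∂μ := by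
        refine integral_mono_ae (integrable_exp_mul_of_le_one hW hexp (by linarith [le_abs_self s]))
          (hlin.add (hexp.const_mul _)) ?_
        filter_upwards [hW] with ω hω
        exact exp_mul_le_one_add_mul_add_sq_mul_exp hω hs
    _ = 1 + s * μ[W] + 4 * s ^ 2 * ∫ ω, exp (W ω) ∂μ := by
        rw [integral_add hlin (hexp.const_mul _),
          integral_add (integrable_const 1) (hWi.const_mul s), integral_const_mul,
          integral_const_mul]
        simp

lemma mgf_sub_integral_le {W : Ω → ℝ} (hW : 0 ≤ᵐ[μ] W)
    (hexp : Integrable (fun ω => exp (W ω)) μ) {s : ℝ} (hs : |s| ≤ 1 / 2) :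
    mgf (fun ω => W ω - μ[W]) μ s ≤ exp (4 * s ^ 2 * ∫ ω, exp (W ω) ∂μ) := by
  simp_rw [sub_eq_add_neg]
  rw [mgf_add_const]
  calc mgf W μ s * exp (s * -μ[W])
      ≤ exp (s * μ[W] + 4 * s ^ 2 * ∫ ω, exp (W ω) ∂μ) * exp (s * -μ[W]) := by
        gcongr
        exact (mgf_le_one_add_mul_integral_add hW hexp hs).trans
          (by linarith [add_one_le_exp (s * μ[W] + 4 * s ^ 2 * ∫ ω, exp (W ω) ∂μ)])
    _ = exp (4 * s ^ 2 * ∫ ω, exp (W ω) ∂μ) := by rw [← exp_add]; ring_nf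

lemma integrable_and_mgf_sum_mul_sub_integral_le {ι : Type*} [Fintype ι] {W : ι → Ω → ℝ}
    (hindep : iIndepFun W μ) (hmeas : ∀ i, Measurable (W i)) (hW : ∀ i, 0 ≤ᵐ[μ] W i)
    (hexp : ∀ i, Integrable (fun ω => exp (W i ω)) μ) {K : ℝ}
    (hK : ∀ i, ∫ ω, exp (W i ω) ∂μ ≤ K) (c : ι → ℝ) {s : ℝ} (hs : ∀ i, |s * c i| ≤ 1 / 2) :
    Integrable (fun ω => exp (s * ∑ i, c i * (W i ω - μ[W i]))) μ ∧
      mgf (fun ω => ∑ i, c i * (W i ω - μ[W i])) μ s ≤ exp (4 * K * s ^ 2 * ∑ i, c i ^ 2) := by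
  set Y : ι → Ω → ℝ := fun i ω => c i * (W i ω - μ[W i])
  have hY : (fun ω => ∑ i, c i * (W i ω - μ[W i])) = ∑ i, Y i := by
    ext ω; simp [Y, Finset.sum_apply]
  have hYindep : iIndepFun Y μ :=
    hindep.comp (fun i u => c i * (u - ∫ ω, W i ω ∂μ)) fun i => by fun_prop
  have hYmeas : ∀ i, Measurable (Y i) := fun i => by fun_prop
  have hYmgf : ∀ i, mgf (Y i) μ s ≤ exp (4 * K * s ^ 2 * c i ^ 2) := fun i => by
    rw [mgf_const_mul, mul_comm]
    refine (mgf_sub_integral_le (hW i) (hexp i) (hs i)).trans (exp_le_exp.mpr ?_)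
    rw [mul_pow]
    nlinarith [hK i, sq_nonneg (s * c i)]
  have hYint : ∀ i, Integrable (fun ω => exp (s * Y i ω)) μ := fun i => by
    refine ((integrable_exp_mul_of_le_one (hW i) (hexp i) (s := s * c i)
      (by linarith [le_abs_self (s * c i), hs i])).mul_const (exp (-(s * c i * μ[W i])))).congr
      (ae_of_all _ fun ω => ?_)
    simp only [Y]; rw [← exp_add]; ring_nf
  refine ⟨by simpa only [Finset.sum_apply] using
    hYindep.integrable_exp_mul_sum (s := Finset.univ) hYmeas fun i _ => hYint i, ?_⟩
  rw [hY, hYindep.mgf_sum hYmeas, Finset.mul_sum, exp_sum]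
  exact Finset.prod_le_prod (fun i _ => mgf_nonneg) fun i _ => hYmgf i

lemma integrable_and_mgf_sum_mul_sq_sub_integral_le {ι : Type*} [Fintype ι] {x : ι → Ω → ℝ}
    (hmeas : ∀ i, Measurable (x i)) (hindep : iIndepFun x μ) {b : ℝ} (hb : 0 < b)
    (hpsi2 : ∀ i, ∫⁻ ω, ENNReal.ofReal (exp (x i ω ^ 2 / b ^ 2)) ∂μ ≤ 2)
    {a : ι → ℝ} {m : ℝ} (ham : ∀ i, |a i| ≤ m) {s : ℝ} (hs0 : 0 ≤ s)
    (hs : s ≤ (2 * (b ^ 2 * m))⁻¹) :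
    Integrable (fun ω => exp (s * ∑ i, a i * (x i ω ^ 2 - ∫ ω', x i ω' ^ 2 ∂μ))) μ ∧
      mgf (fun ω => ∑ i, a i * (x i ω ^ 2 - ∫ ω', x i ω' ^ 2 ∂μ)) μ s ≤
        exp (16 * (b ^ 4 * ∑ i, a i ^ 2) * s ^ 2 / 2) := by
  have hb2 : 0 < b ^ 2 := pow_pos hb 2
  set W : ι → Ω → ℝ := fun i ω => x i ω ^ 2 / b ^ 2
  have hW : ∀ i, Integrable (fun ω => exp (W i ω)) μ ∧ ∫ ω, exp (W i ω) ∂μ ≤ 2 := fun i => by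
    simpa using integrable_and_integral_le_of_lintegral_ofReal_le
      (ae_of_all _ fun ω => (exp_pos _).le) (by fun_prop) ENNReal.ofNat_ne_top (hpsi2 i)
  have hS : ∀ ω, ∑ i, a i * (x i ω ^ 2 - ∫ ω', x i ω' ^ 2 ∂μ) =
      ∑ i, b ^ 2 * a i * (W i ω - μ[W i]) := fun ω =>
    Finset.sum_congr rfl fun i _ => by simp only [W, integral_div]; field_simp
  have hσ : ∑ i, (b ^ 2 * a i) ^ 2 = b ^ 4 * ∑ i, a i ^ 2 := by
    rw [Finset.mul_sum]; exact Finset.sum_congr rfl fun i _ => by ring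
  obtain ⟨hint, hle⟩ := integrable_and_mgf_sum_mul_sub_integral_le
    (hindep.comp (fun _ u => u ^ 2 / b ^ 2) fun _ => by fun_prop) (fun i => by fun_prop)
    (fun i => ae_of_all _ fun ω => div_nonneg (sq_nonneg _) hb2.le) (fun i => (hW i).1)
    (fun i => (hW i).2) (fun i => b ^ 2 * a i) fun i => abs_mul_le_half_of_le_inv hs0 hs <| by
      rw [abs_mul, abs_of_pos hb2]; exact mul_le_mul_of_nonneg_left (ham i) hb2.le
  simp only [hS]
  exact ⟨hint, hle.trans_eq (by rw [hσ]; ring_nf)⟩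

end

open MeasureTheory ProbabilityTheory in
theorem weighted_centered_squares_concentration_general
    {Ω : Type*} [MeasurableSpace Ω] (P : Measure Ω) [IsProbabilityMeasure P]
    (n : ℕ) (b : ℝ) (hb : 0 < b) (x : Ω → Fin n → ℝ)
    (hmeas : ∀ i : Fin n, Measurable fun ω => x ω i)
    (hindep : iIndepFun (fun i ω => x ω i) P)
    (hpsi2 : ∀ i : Fin n,
      ∫⁻ ω, ENNReal.ofReal (Real.exp ((x ω i) ^ 2 / b ^ 2)) ∂P ≤ 2)
    (a : Fin n → ℝ)
    (t : ℝ) (ht : 0 ≤ t) :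
    (P {ω | ∑ i : Fin n, a i * ((x ω i) ^ 2 - ∫ ω', (x ω' i) ^ 2 ∂P) > t}).toReal ≤
      Real.exp (-(1 / 64) *
        min (t ^ 2 / (b ^ 4 * ∑ i : Fin n, a i ^ 2)) (t / (b ^ 2 * ⨆ i : Fin n, |a i|))) := by
  set M := ⨆ i, |a i|
  set σ := b ^ 4 * ∑ i, a i ^ 2
  have hM0 : 0 ≤ M := Real.iSup_nonneg fun i => abs_nonneg (a i)
  have hA : 0 ≤ t ^ 2 / σ := by positivity
  have hB : 0 ≤ t / (b ^ 2 * M) := by positivity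
  calc (P {ω | ∑ i, a i * (x ω i ^ 2 - ∫ ω', x ω' i ^ 2 ∂P) > t}).toReal
      ≤ P.real {ω | t ≤ ∑ i, a i * (x ω i ^ 2 - ∫ ω', x ω' i ^ 2 ∂P)} :=
        measureReal_mono fun ω (hω : _ > t) => hω.le
    _ ≤ exp (-(min (t ^ 2 / (16 * σ)) (t / (2 * (b ^ 2 * M))) / 2)) :=
        measureReal_ge_le_exp_neg_min_of_mgf_le (by positivity) (by positivity) ht fun s hs0 hs =>
          integrable_and_mgf_sum_mul_sq_sub_integral_le (x := fun i ω => x ω i) hmeas hindep hb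
            hpsi2 (fun i => le_ciSup (f := fun i => |a i|) (Set.finite_range _).bddAbove i) hs0 hs
    _ ≤ exp (-(1 / 64) * min (t ^ 2 / σ) (t / (b ^ 2 * M))) := by
        rw [exp_le_exp, div_mul_eq_div_div_swap (t ^ 2) 16 σ, div_mul_eq_div_div_swap t 2]
        have hmin : min (t ^ 2 / σ) (t / (b ^ 2 * M)) / 32 ≤
            min (t ^ 2 / σ / 16) (t / (b ^ 2 * M) / 2) :=
          le_min (by linarith [min_le_left (t ^ 2 / σ) (t / (b ^ 2 * M))])
            (by linarith [min_le_right (t ^ 2 / σ) (t / (b ^ 2 * M))])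
        linarith [le_min hA hB]

open MeasureTheory ProbabilityTheory in
theorem weighted_centered_squares_concentration
    {Ω : Type*} [MeasurableSpace Ω] (P : Measure Ω) [IsProbabilityMeasure P]
    (n : ℕ) (hn : 1 ≤ n) (b : ℝ) (hb : 0 < b) (x : Ω → Fin n → ℝ)
    (hmeas : ∀ i : Fin n, Measurable fun ω => x ω i)
    (hindep : iIndepFun (fun i ω => x ω i) P)
    (hmean : ∀ i : Fin n, ∫ ω, x ω i ∂P = 0)
    (hpsi2 : ∀ i : Fin n,
      ∫⁻ ω, ENNReal.ofReal (Real.exp ((x ω i) ^ 2 / b ^ 2)) ∂P ≤ 2)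
    (a : Fin n → ℝ) (ha : a ≠ 0)
    (t : ℝ) (ht : 0 ≤ t) :
    (P {ω | ∑ i : Fin n, a i * ((x ω i) ^ 2 - ∫ ω', (x ω' i) ^ 2 ∂P) > t}).toReal ≤
      Real.exp (-(1 / 64) *
        min (t ^ 2 / (b ^ 4 * ∑ i : Fin n, a i ^ 2)) (t / (b ^ 2 * ⨆ i : Fin n, |a i|))) :=
  weighted_centered_squares_concentration_general P n b hb x hmeas hindep hpsi2 a t ht
end
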